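/- arXiv:0912.3054 — 2 statements merged into one kernel-verified Lean document; each statement's English description precedes it below -/
import Mathlib

section
/- Let A = (a_{ij}) be an n×n integer matrix with a_{jj} = 1 for all j and such that every principal minor of A equals ±1. Let ε_{ji} (1 ≤ i < j ≤ n) be integers and f_j = ∑_{i<j} ε_{ji}·x_i. If there exists a ring isomorphism between ℤ[x₁,…,x_n]/⟨x_j(x_j − f_j) : j⟩ and R_A = ℤ[y₁,…,y_n]/⟨y_j·(∑_{i=1}^n a_{ji}·y_i) : j⟩ carrying the ℤ-span of the generators x₁,…,x_n onto the ℤ-span of the generators y₁,…,y_n, then every principal minor of A equals 1. -/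
open MvPolynomial

/-- `f j = ∑_{i < j} ε j i • x i`, the twisting class of the `j`-th stage. -/
noncomputable def bottF (n : ℕ) (ε : Fin n → Fin n → ℤ) (j : Fin n) :
    MvPolynomial (Fin n) ℤ :=
  ∑ i : Fin n, if i < j then C (ε j i) * X i else 0

/-- The defining ideal `⟨x_j (x_j - f_j) : j⟩` of the Bott ring. -/
noncomputable def bottIdeal (n : ℕ) (ε : Fin n → Fin n → ℤ) :
    Ideal (MvPolynomial (Fin n) ℤ) :=
  Ideal.span (Set.range fun j : Fin n => X j * (X j - bottF n ε j))

/-- The defining ideal `⟨y_j · (∑ i, a_{ji} y_i) : j⟩` of the cohomology ring `R_A` of a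
quasitoric manifold over a cube with characteristic data `A`. -/
noncomputable def quasiIdeal (n : ℕ) (A : Matrix (Fin n) (Fin n) ℤ) :
    Ideal (MvPolynomial (Fin n) ℤ) :=
  Ideal.span (Set.range fun j : Fin n => X j * ∑ i : Fin n, C (A j i) * X i)

/-- The principal minor of `A` on the index set `S`. -/
noncomputable def principalMinor (n : ℕ) (A : Matrix (Fin n) (Fin n) ℤ)
    (S : Finset (Fin n)) : ℤ :=
  (A.submatrix (fun i : {x // x ∈ S} => (i : Fin n)) fun j : {x // x ∈ S} => (j : Fin n)).det

/-!
A graded isomorphism sends `x_j` to a linear form `∑ i, P j i • y_i`, and the rows of `P` span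
`ℤⁿ`. The degree-two part of the defining ideal of `R_A` is spanned by its generators, so the
image of each Bott relation `x_j (x_j - f_j)` is an identity between integral quadratic forms.
Given `S`, let `j` be the first index whose row `c = P j` does not vanish on `S`: the earlier
rows vanish on `S`, hence so does the image of `f_j`, and `(∑_{i ∈ S} c_i y_i)² = 0` in
`R_{A_S}`. On the support of `c`, the `2 × 2` and `3 × 3` principal minors being `±1` make
`A q p = 0` a strict total order; its top element `m` satisfies `A m q = 0` for every other
`q ∈ S` (off the support this is read off the square-zero identity directly), so the minor on
`S` equals the minor on `S.erase m`, and induction on `S` ends at the empty minor `1`.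
-/

open Finset Matrix

section LinearForm

variable {σ R : Type*} [CommSemiring R] [Fintype σ]

noncomputable def linearForm : (σ → R) →ₗ[R] MvPolynomial σ R :=
  Fintype.linearCombination R X

theorem linearForm_apply (b : σ → R) : linearForm b = ∑ i, b i • X i :=
  Fintype.linearCombination_apply _ _ _

theorem linearForm_single [DecidableEq σ] (i : σ) : linearForm (Pi.single i 1 : σ → R) = X i := by
  simp [linearForm]

theorem isHomogeneous_linearForm (b : σ → R) : (linearForm b).IsHomogeneous 1 :=
  IsHomogeneous.sum _ _ _ fun i _ => by
    simpa [smul_eq_C_mul] using isHomogeneous_C_mul_X (b i) i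

theorem coeff_single_linearForm [DecidableEq σ] (b : σ → R) (i : σ) :
    coeff (Finsupp.single i 1) (linearForm b) = b i := by
  simp [linearForm_apply, coeff_sum, coeff_X, Finsupp.single_left_inj]

theorem eval_linearForm (x b : σ → R) : eval x (linearForm b) = b ⬝ᵥ x := by
  simp [linearForm_apply, dotProduct]

end LinearForm

section HomogeneousSpan

variable {σ R κ : Type*} [CommSemiring R] [Fintype κ] {d : ℕ}

theorem coeff_mul_of_isHomogeneous_of_degree_le {f g : MvPolynomial σ R} (hg : g.IsHomogeneous d)
    {m : σ →₀ ℕ} (hm : m.degree ≤ d) : coeff m (f * g) = coeff 0 f * coeff m g := by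
  classical
  rw [coeff_mul, Finset.sum_eq_single (0, m)]
  · rintro ⟨a, b⟩ hab hne
    rw [Finset.HasAntidiagonal.mem_antidiagonal] at hab
    dsimp only at hab ⊢
    by_cases hb : coeff b g = 0
    · rw [hb, mul_zero]
    have hbd : b.degree = d := by_contra fun h => hb (hg.coeff_eq_zero h)
    have ha : a = 0 := by
      rw [← Finsupp.degree_eq_zero_iff]
      have := congrArg Finsupp.degree hab
      rw [map_add] at this
      omega
    subst ha
    rw [zero_add] at hab
    exact absurd (hab ▸ rfl) hne
  · simp

theorem exists_coeff_eq_sum_of_mem_span {g : κ → MvPolynomial σ R}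
    (hg : ∀ k, (g k).IsHomogeneous d) {f : MvPolynomial σ R} (hf : f ∈ Ideal.span (Set.range g)) :
    ∃ l : κ → R, ∀ m : σ →₀ ℕ, m.degree ≤ d → coeff m f = ∑ k, l k * coeff m (g k) := by
  obtain ⟨a, rfl⟩ := Ideal.mem_span_range_iff_exists_fun.1 hf
  exact ⟨fun k => coeff 0 (a k), fun m hm => by
    simp only [coeff_sum, coeff_mul_of_isHomogeneous_of_degree_le (hg _) hm]⟩

theorem exists_eq_sum_of_isHomogeneous_of_mem_span {g : κ → MvPolynomial σ R}
    (hg : ∀ k, (g k).IsHomogeneous d) {f : MvPolynomial σ R} (hf : f.IsHomogeneous d)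
    (hmem : f ∈ Ideal.span (Set.range g)) : ∃ l : κ → R, f = ∑ k, C (l k) * g k := by
  obtain ⟨l, hl⟩ := exists_coeff_eq_sum_of_mem_span hg hmem
  refine ⟨l, MvPolynomial.ext _ _ fun m => ?_⟩
  simp only [coeff_sum, coeff_C_mul]
  by_cases hm : m.degree = d
  · exact hl m hm.le
  · simp [hf.coeff_eq_zero hm, (hg _).coeff_eq_zero hm]

end HomogeneousSpan

section QuasiIdeal

variable {n : ℕ} {A : Matrix (Fin n) (Fin n) ℤ}

theorem quasiIdeal_eq_span :
    quasiIdeal n A = Ideal.span (Set.range fun j => X j * linearForm (A j)) := by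
  simp [quasiIdeal, linearForm_apply, smul_eq_C_mul]

theorem isHomogeneous_X_mul_linearForm (j : Fin n) (b : Fin n → ℤ) :
    (X j * linearForm b).IsHomogeneous 2 :=
  (isHomogeneous_X ℤ j).mul (isHomogeneous_linearForm b)

theorem eq_zero_of_linearForm_mem_quasiIdeal {b : Fin n → ℤ} (h : linearForm b ∈ quasiIdeal n A) :
    b = 0 := by
  rw [quasiIdeal_eq_span] at h
  obtain ⟨l, hl⟩ :=
    exists_coeff_eq_sum_of_mem_span (fun j => isHomogeneous_X_mul_linearForm j (A j)) h
  funext i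
  rw [← coeff_single_linearForm b i, hl _ (by simp)]
  have hdeg : (Finsupp.single i 1).degree ≠ 2 := by simp
  simp [(isHomogeneous_X_mul_linearForm _ _).coeff_eq_zero hdeg]

theorem polar_eq_of_mul_mem_quasiIdeal (hdiag : ∀ i, A i i = 1) {u v : Fin n → ℤ}
    (h : linearForm u * linearForm v ∈ quasiIdeal n A) (p q : Fin n) :
    u p * v q + u q * v p = u p * v p * A p q + u q * v q * A q p := by
  rw [quasiIdeal_eq_span] at h
  obtain ⟨l, hl⟩ := exists_eq_sum_of_isHomogeneous_of_mem_span
    (fun j => isHomogeneous_X_mul_linearForm j (A j))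
    ((isHomogeneous_linearForm u).mul (isHomogeneous_linearForm v)) h
  have heval : ∀ x, (u ⬝ᵥ x) * (v ⬝ᵥ x) = (fun k => l k * (A k ⬝ᵥ x)) ⬝ᵥ x := fun x => by
    simpa [eval_linearForm, dotProduct, mul_comm, mul_left_comm] using congrArg (eval x) hl
  have hp := heval (Pi.single p 1)
  have hq := heval (Pi.single q 1)
  have hpq := heval (Pi.single p 1 + Pi.single q 1)
  simp only [dotProduct_add, dotProduct_single, mul_one, hdiag] at hp hq hpq
  linear_combination hpq - (1 + A p q) * hp - (1 + A q p) * hq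

end QuasiIdeal

section Quotient

variable {σ : Type*} [Fintype σ]

theorem mk_linearForm (I : Ideal (MvPolynomial σ ℤ)) (b : σ → ℤ) :
    Ideal.Quotient.mk I (linearForm b) = ∑ i, b i • Ideal.Quotient.mk I (X i) := by
  simp [linearForm_apply]

theorem mem_span_mk_X_iff (I : Ideal (MvPolynomial σ ℤ)) {x : MvPolynomial σ ℤ ⧸ I} :
    x ∈ Submodule.span ℤ (Set.range fun i => Ideal.Quotient.mk I (X i)) ↔
      ∃ b, Ideal.Quotient.mk I (linearForm b) = x := by
  simp [Submodule.mem_span_range_iff_exists_fun, mk_linearForm]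

theorem exists_matrix_map_mk_linearForm {I J : Ideal (MvPolynomial σ ℤ)} {F : Type*}
    [FunLike F (MvPolynomial σ ℤ ⧸ I) (MvPolynomial σ ℤ ⧸ J)]
    [RingHomClass F (MvPolynomial σ ℤ ⧸ I) (MvPolynomial σ ℤ ⧸ J)] (ψ : F)
    (h : ∀ j, ψ (Ideal.Quotient.mk I (X j)) ∈
      Submodule.span ℤ (Set.range fun i => Ideal.Quotient.mk J (X i))) :
    ∃ P : Matrix σ σ ℤ, ∀ b, ψ (Ideal.Quotient.mk I (linearForm b)) =
      Ideal.Quotient.mk J (linearForm (b ᵥ* P)) := by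
  choose P hP using fun j => (mem_span_mk_X_iff J).1 (h j)
  refine ⟨Matrix.of P, fun b => ?_⟩
  calc ψ (Ideal.Quotient.mk I (linearForm b))
      = ∑ j, b j • Ideal.Quotient.mk J (linearForm (P j)) := by
        simp only [mk_linearForm, map_sum, map_zsmul, hP]
    _ = Ideal.Quotient.mk J (linearForm (b ᵥ* Matrix.of P)) := by
        simp only [Matrix.vecMul_eq_sum, map_sum, map_zsmul]
        rfl

theorem exists_ne_zero_of_mk_X_mem_map [DecidableEq σ] {I J : Ideal (MvPolynomial σ ℤ)} {F : Type*}
    [FunLike F (MvPolynomial σ ℤ ⧸ I) (MvPolynomial σ ℤ ⧸ J)]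
    [RingHomClass F (MvPolynomial σ ℤ ⧸ I) (MvPolynomial σ ℤ ⧸ J)] (ψ : F) {P : Matrix σ σ ℤ}
    (hP : ∀ b, ψ (Ideal.Quotient.mk I (linearForm b)) = Ideal.Quotient.mk J (linearForm (b ᵥ* P)))
    (hJ : ∀ b, linearForm b ∈ J → b = 0) {p : σ}
    (hp : Ideal.Quotient.mk J (X p) ∈
      Submodule.map (ψ : (MvPolynomial σ ℤ ⧸ I) →+* (MvPolynomial σ ℤ ⧸ J)).toIntAlgHom.toLinearMap
        (Submodule.span ℤ (Set.range fun i => Ideal.Quotient.mk I (X i)))) :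
    ∃ j, P j p ≠ 0 := by
  obtain ⟨y, hy, hyp⟩ := Submodule.mem_map.1 hp
  obtain ⟨d, rfl⟩ := (mem_span_mk_X_iff I).1 hy
  change ψ _ = _ at hyp
  rw [hP, ← linearForm_single, ← sub_eq_zero, ← map_sub, ← map_sub,
    Ideal.Quotient.eq_zero_iff_mem] at hyp
  have hdp : (d ᵥ* P) p = 1 := by
    simpa [sub_eq_zero] using congrFun (hJ _ hyp) p
  obtain ⟨j, -, hj⟩ := Finset.exists_ne_zero_of_sum_ne_zero (hdp ▸ one_ne_zero)
  exact ⟨j, right_ne_zero_of_mul hj⟩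

end Quotient

section PrincipalMinor

variable {n : ℕ} (A : Matrix (Fin n) (Fin n) ℤ)

theorem principalMinor_image {k : ℕ} {f : Fin k → Fin n} (hf : Function.Injective f) :
    principalMinor n A (univ.image f) = (A.submatrix f f).det := by
  let e : Fin k ≃ {x // x ∈ univ.image f} :=
    (Equiv.ofInjective f hf).trans (Equiv.subtypeEquivRight (by simp))
  rw [principalMinor, ← det_submatrix_equiv_self e]
  rfl

theorem principalMinor_pair {p q : Fin n} (hpq : p ≠ q) :
    principalMinor n A {p, q} = A p p * A q q - A p q * A q p := by
  have hf : Function.Injective ![p, q] := by simp [hpq]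
  rw [show ({p, q} : Finset _) = univ.image ![p, q] by simp [Fin.univ_succ],
    principalMinor_image A hf, det_fin_two]
  simp

theorem principalMinor_triple {p q t : Fin n} (hpq : p ≠ q) (hpt : p ≠ t) (hqt : q ≠ t) :
    principalMinor n A {p, q, t} =
      A p p * A q q * A t t - A p p * A q t * A t q - A p q * A q p * A t t
      + A p q * A q t * A t p + A p t * A q p * A t q - A p t * A q q * A t p := by
  have hf : Function.Injective ![p, q, t] := by
    simp [Function.Injective, Fin.forall_fin_succ, hpq, hpt, hqt, hpq.symm, hpt.symm, hqt.symm]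
  rw [show ({p, q, t} : Finset _) = univ.image ![p, q, t] by simp [Fin.univ_succ],
    principalMinor_image A hf, det_fin_three]
  simp

theorem principalMinor_eq_mul_erase {S : Finset (Fin n)} {m : Fin n} (hm : m ∈ S)
    (hrow : ∀ q ∈ S, q ≠ m → A m q = 0) :
    principalMinor n A S = A m m * principalMinor n A (S.erase m) := by
  rw [principalMinor, twoBlockTriangular_det' _ (fun x : S => (x : Fin n) = m)]
  · congr 1
    · have : Subsingleton {x : S // (x : Fin n) = m} :=
        ⟨fun x y => Subtype.ext (Subtype.ext (x.2.trans y.2.symm))⟩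
      exact det_eq_elem_of_subsingleton _ (⟨⟨m, hm⟩, rfl⟩ : {x : S // (x : Fin n) = m})
    · let e : {x : S // ¬ (x : Fin n) = m} ≃ S.erase m :=
        (Equiv.subtypeSubtypeEquivSubtypeInter (· ∈ S) (· ≠ m)).trans
          (Equiv.subtypeEquivRight (fun x => by simp [and_comm]))
      rw [principalMinor, ← det_submatrix_equiv_self e]
      rfl
  · rintro i hi j hj
    change A i j = 0
    rw [hi]
    exact hrow j j.2 (hi ▸ hj)

end PrincipalMinor

/-- For `A` with unit diagonal, this says `(∑_{i ∈ S} c_i y_i)² = 0` in `R_{A_S}`: the square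
equals `∑_k λ_k y_k (∑_{i ∈ S} a_{ki} y_i)` exactly when `λ_p = c_p²` and, for `p ≠ q`,
`2 c_p c_q = λ_p a_{pq} + λ_q a_{qp}`. -/
def IsSquareZeroOn {n : ℕ} (A : Matrix (Fin n) (Fin n) ℤ) (S : Finset (Fin n)) (c : Fin n → ℤ) :
    Prop :=
  ∀ p ∈ S, ∀ q ∈ S, 2 * (c p * c q) = c p ^ 2 * A p q + c q ^ 2 * A q p

namespace IsSquareZeroOn

variable {n : ℕ} {A : Matrix (Fin n) (Fin n) ℤ} {S : Finset (Fin n)} {c : Fin n → ℤ} {p q t : Fin n}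

theorem entry_eq_zero (hc : IsSquareZeroOn A S c) (hp : p ∈ S) (hq : q ∈ S) (hcp : c p ≠ 0)
    (hcq : c q = 0) : A p q = 0 := by
  have h := hc p hp q hq
  rw [hcq] at h
  have h' : c p ^ 2 * A p q = 0 := by linear_combination -h
  exact (mul_eq_zero.1 h').resolve_left (pow_ne_zero 2 hcp)

theorem mul_entry_eq (hc : IsSquareZeroOn A S c) (hp : p ∈ S) (hq : q ∈ S) (hcp : c p ≠ 0)
    (hqp : A q p = 0) : A p q * c p = 2 * c q := by
  have h := hc p hp q hq
  rw [hqp] at h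
  exact mul_right_cancel₀ hcp (by linear_combination -h)

theorem entry_eq_zero_iff (hdiag : ∀ i, A i i = 1)
    (hminor : ∀ S, principalMinor n A S = 1 ∨ principalMinor n A S = -1)
    (hc : IsSquareZeroOn A S c) (hp : p ∈ S) (hq : q ∈ S) (hpq : p ≠ q) (hcp : c p ≠ 0)
    (hcq : c q ≠ 0) : A p q = 0 ↔ A q p ≠ 0 := by
  have h := hc p hp q hq
  constructor
  · rintro hpq0 hqp0
    rw [hpq0, hqp0] at h
    exact mul_ne_zero hcp hcq (by linarith)
  · intro hqp0
    by_contra hpq0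
    have hprod : A p q * A q p = 2 := by
      have := hminor {p, q}
      rw [principalMinor_pair A hpq, hdiag, hdiag] at this
      have : A p q * A q p ≠ 0 := mul_ne_zero hpq0 hqp0
      omega
    have : (A p q * c p - c q) ^ 2 + c q ^ 2 = 0 := by
      linear_combination (-(A p q)) * h - c q ^ 2 * hprod
    have : c q ^ 2 = 0 := by nlinarith [sq_nonneg (A p q * c p - c q), sq_nonneg (c q)]
    exact hcq (pow_eq_zero_iff two_ne_zero |>.1 this)

theorem entry_trans (hdiag : ∀ i, A i i = 1)
    (hminor : ∀ S, principalMinor n A S = 1 ∨ principalMinor n A S = -1)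
    (hc : IsSquareZeroOn A S c) (hp : p ∈ S) (hq : q ∈ S) (ht : t ∈ S) (hcp : c p ≠ 0)
    (hcq : c q ≠ 0) (hct : c t ≠ 0) (hqp : A q p = 0) (htq : A t q = 0) : A t p = 0 := by
  have hpq : p ≠ q := by rintro rfl; simp [hdiag] at hqp
  have hqt : q ≠ t := by rintro rfl; simp [hdiag] at htq
  have hpt : p ≠ t := by
    rintro rfl
    exact (hc.entry_eq_zero_iff hdiag hminor hq hp hpq.symm hcq hcp).1 hqp htq
  by_contra htp
  have hpt0 : A p t = 0 := (hc.entry_eq_zero_iff hdiag hminor hp ht hpt hcp hct).2 htp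
  have e1 := hc.mul_entry_eq hp hq hcp hqp
  have e2 := hc.mul_entry_eq hq ht hcq htq
  have e3 := hc.mul_entry_eq ht hp hct hpt0
  have hcycle : A p q * A q t * A t p = 8 := by
    apply mul_right_cancel₀ (mul_ne_zero (mul_ne_zero hcp hcq) hct)
    linear_combination (A q t * c q * (A t p * c t)) * e1 + (2 * c q * (A t p * c t)) * e2
      + (2 * c q * (2 * c t)) * e3
  have h3 := hminor {p, q, t}
  rw [principalMinor_triple A hpq hpt hqt, hdiag, hdiag, hdiag, hqp, htq, hpt0] at h3
  rcases h3 with h3 | h3 <;> linarith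

theorem exists_zero_row (hdiag : ∀ i, A i i = 1)
    (hminor : ∀ S, principalMinor n A S = 1 ∨ principalMinor n A S = -1)
    (hc : IsSquareZeroOn A S c) (hS : ∃ p ∈ S, c p ≠ 0) :
    ∃ m ∈ S, ∀ q ∈ S, q ≠ m → A m q = 0 := by
  set s := S.filter (fun i => c i ≠ 0)
  have mem_s : ∀ {i}, i ∈ s ↔ i ∈ S ∧ c i ≠ 0 := Finset.mem_filter
  let r : Fin n → Fin n → Prop := fun x a => x ∈ s ∧ a ∈ s ∧ A x a = 0
  have : IsTrans _ r := ⟨fun x y a ⟨hx, hy, hxy⟩ ⟨_, ha, hya⟩ =>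
    ⟨hx, ha, hc.entry_trans hdiag hminor (mem_s.1 ha).1 (mem_s.1 hy).1 (mem_s.1 hx).1
      (mem_s.1 ha).2 (mem_s.1 hy).2 (mem_s.1 hx).2 hya hxy⟩⟩
  have : Std.Irrefl r := ⟨fun x h => by simp [r, hdiag] at h⟩
  obtain ⟨m, hm, hmin⟩ := (Finite.wellFounded_of_trans_of_irrefl r).has_min (s : Set (Fin n))
    (by obtain ⟨p, hp, hcp⟩ := hS; exact ⟨p, mem_s.2 ⟨hp, hcp⟩⟩)
  obtain ⟨hmS, hcm⟩ := mem_s.1 hm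
  refine ⟨m, hmS, fun q hq hqm => ?_⟩
  by_cases hcq : c q = 0
  · exact hc.entry_eq_zero hmS hq hcm hcq
  · exact (hc.entry_eq_zero_iff hdiag hminor hmS hq hqm.symm hcm hcq).2
      fun hqm0 => hmin q (mem_s.2 ⟨hq, hcq⟩) ⟨mem_s.2 ⟨hq, hcq⟩, hm, hqm0⟩

end IsSquareZeroOn

theorem principalMinor_eq_one_of_exists_isSquareZeroOn {n : ℕ} {A : Matrix (Fin n) (Fin n) ℤ}
    (hdiag : ∀ i, A i i = 1)
    (hminor : ∀ S, principalMinor n A S = 1 ∨ principalMinor n A S = -1)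
    (hsq : ∀ S : Finset (Fin n), S.Nonempty → ∃ c, (∃ p ∈ S, c p ≠ 0) ∧ IsSquareZeroOn A S c)
    (S : Finset (Fin n)) : principalMinor n A S = 1 := by
  induction S using Finset.strongInduction with
  | H S ih =>
    rcases S.eq_empty_or_nonempty with rfl | hS
    · simp [principalMinor]
    obtain ⟨c, hc0, hc⟩ := hsq S hS
    obtain ⟨m, hm, hrow⟩ := hc.exists_zero_row hdiag hminor hc0
    rw [principalMinor_eq_mul_erase A hm hrow, hdiag, one_mul]
    exact ih _ (Finset.erase_ssubset hm)

theorem bottF_eq_linearForm (n : ℕ) (ε : Fin n → Fin n → ℤ) (j : Fin n) :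
    bottF n ε j = linearForm fun i => if i < j then ε j i else 0 := by
  simp only [bottF, linearForm_apply]
  refine Finset.sum_congr rfl fun i _ => ?_
  split_ifs <;> simp [smul_eq_C_mul]

theorem linearForm_mul_mem_of_map_bottIdeal {n : ℕ} {ε : Fin n → Fin n → ℤ}
    {J : Ideal (MvPolynomial (Fin n) ℤ)} {F : Type*}
    [FunLike F (MvPolynomial (Fin n) ℤ ⧸ bottIdeal n ε) (MvPolynomial (Fin n) ℤ ⧸ J)]
    [RingHomClass F (MvPolynomial (Fin n) ℤ ⧸ bottIdeal n ε) (MvPolynomial (Fin n) ℤ ⧸ J)]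
    (ψ : F) {P : Matrix (Fin n) (Fin n) ℤ}
    (hP : ∀ b, ψ (Ideal.Quotient.mk (bottIdeal n ε) (linearForm b)) =
      Ideal.Quotient.mk J (linearForm (b ᵥ* P))) (j : Fin n) :
    linearForm (P j) * linearForm (P j - (fun i => if i < j then ε j i else 0) ᵥ* P) ∈ J := by
  have h := congrArg ψ (Ideal.Quotient.eq_zero_iff_mem.2 (Ideal.subset_span ⟨j, rfl⟩) :
    Ideal.Quotient.mk (bottIdeal n ε) (X j * (X j - bottF n ε j)) = 0)
  rw [← linearForm_single, bottF_eq_linearForm, ← map_sub, map_mul, map_mul, hP, hP, map_zero,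
    Matrix.sub_vecMul, Matrix.single_one_vecMul, ← map_mul, Ideal.Quotient.eq_zero_iff_mem] at h
  exact h

theorem exists_isSquareZeroOn {n : ℕ} {A : Matrix (Fin n) (Fin n) ℤ} (hdiag : ∀ i, A i i = 1)
    {P E : Matrix (Fin n) (Fin n) ℤ} (hE : ∀ j i, ¬i < j → E j i = 0)
    (hcover : ∀ p, ∃ j, P j p ≠ 0)
    (hrel : ∀ j, linearForm (P j) * linearForm (P j - E j ᵥ* P) ∈ quasiIdeal n A)
    {S : Finset (Fin n)} (hS : S.Nonempty) : ∃ c, (∃ p ∈ S, c p ≠ 0) ∧ IsSquareZeroOn A S c := by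
  obtain ⟨p, hp⟩ := hS
  obtain ⟨j, hj⟩ := hcover p
  obtain ⟨j₀, hj₀, hmin⟩ := wellFounded_lt.has_min {j | ∃ p ∈ S, P j p ≠ 0} ⟨j, p, hp, hj⟩
  have hw : ∀ q ∈ S, (E j₀ ᵥ* P) q = 0 := fun q hq => by
    simp only [vecMul, dotProduct]
    refine Finset.sum_eq_zero fun i _ => ?_
    by_cases hi : i < j₀
    · rw [not_not.1 fun h => hmin i ⟨q, hq, h⟩ hi, mul_zero]
    · rw [hE j₀ i hi, zero_mul]
  refine ⟨P j₀, hj₀, fun p hp q hq => ?_⟩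
  have := polar_eq_of_mul_mem_quasiIdeal hdiag (hrel j₀) p q
  simp only [Pi.sub_apply, hw p hp, hw q hq, sub_zero] at this
  linear_combination this

/-- If `A` is an integer matrix with unit diagonal all of whose principal minors are `±1`,
and `R_A` is isomorphic to a Bott ring by a ring isomorphism carrying the ℤ-span of the
degree-two generators onto the ℤ-span of the degree-two generators, then every principal
minor of `A` equals `1`. -/
theorem stmt10 (n : ℕ) (A : Matrix (Fin n) (Fin n) ℤ)
    (hdiag : ∀ j, A j j = 1)
    (hminor : ∀ S : Finset (Fin n), principalMinor n A S = 1 ∨ principalMinor n A S = -1)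
    (ε : Fin n → Fin n → ℤ)
    (hiso : ∃ ψ : (MvPolynomial (Fin n) ℤ ⧸ bottIdeal n ε) ≃+*
        (MvPolynomial (Fin n) ℤ ⧸ quasiIdeal n A),
      Submodule.map (ψ : (MvPolynomial (Fin n) ℤ ⧸ bottIdeal n ε) →+*
            (MvPolynomial (Fin n) ℤ ⧸ quasiIdeal n A)).toIntAlgHom.toLinearMap
          (Submodule.span ℤ
            (Set.range fun i : Fin n => Ideal.Quotient.mk (bottIdeal n ε) (X i))) =
        Submodule.span ℤ
          (Set.range fun i : Fin n => Ideal.Quotient.mk (quasiIdeal n A) (X i))) :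
    ∀ S : Finset (Fin n), principalMinor n A S = 1 := by
  obtain ⟨ψ, hmap⟩ := hiso
  obtain ⟨P, hP⟩ := exists_matrix_map_mk_linearForm ψ fun j => by
    rw [← hmap]
    exact Submodule.mem_map.2 ⟨_, Submodule.subset_span ⟨j, rfl⟩, rfl⟩
  have hcover : ∀ p, ∃ j, P j p ≠ 0 := fun p =>
    exists_ne_zero_of_mk_X_mem_map ψ hP (fun _ => eq_zero_of_linearForm_mem_quasiIdeal) <| by
      rw [hmap]
      exact Submodule.subset_span ⟨p, rfl⟩
  exact principalMinor_eq_one_of_exists_isSquareZeroOn hdiag hminor fun S hS =>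
    exists_isSquareZeroOn hdiag (E := Matrix.of fun j i => if i < j then ε j i else 0)
      (fun j i h => if_neg h) hcover (linearForm_mul_mem_of_map_bottIdeal ψ hP) hS
end

section
/- Let m ≥ 1 and let φ be a graded ring automorphism of S_m = ℤ[x₁,…,x_m]/⟨x₁²,…,x_m²⟩, i.e., a ring automorphism carrying the ℤ-span of x₁,…,x_m onto itself. Then there exist a permutation σ of {1,…,m} and signs ε₁,…,ε_m ∈ {1, −1} such that φ(x_i) = ε_i·x_{σ(i)} for all i. -/
/-!
Write `xᵢ` for the class of `Xᵢ` in `S_m`. Reading off coefficients of squarefree monomials, which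
vanish on `⟨x₁²,…,x_m²⟩`, shows that the `xᵢ` are linearly independent and that
`(∑ cⱼ xⱼ)² = 2 ∑_{p<q} c_p c_q x_p x_q` vanishes only if at most one `cⱼ` is nonzero. Hence a ring
endomorphism preserving the span of the `xᵢ` sends each `xᵢ` to a multiple `aᵢ x_{σ i}`, and
applying this to `φ` and `φ⁻¹` gives `τ ∘ σ = id` and `aᵢ b_{σ i} = 1`.
-/

open MvPolynomial

/-- The defining ideal `⟨x₁²,…,x_m²⟩` of `S_m = H^*((ℂP¹)^m ; ℤ)`. -/
noncomputable def sqIdeal (m : ℕ) : Ideal (MvPolynomial (Fin m) ℤ) :=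
  Ideal.span (Set.range fun i : Fin m => (X i) ^ 2)

theorem LinearIndependent.eq_and_eq_one_of_eq_smul {ι R M : Type*} [Semiring R] [Nontrivial R]
    [AddCommMonoid M] [Module R M] {v : ι → M} (hv : LinearIndependent R v) {i j : ι} {c : R}
    (h : v i = c • v j) : j = i ∧ c = 1 := by
  have hsingle : Finsupp.single i 1 = Finsupp.single j c :=
    hv <| by simpa [Finsupp.linearCombination_single] using h
  rcases (Finsupp.single_eq_single_iff _ _ _ _).mp hsingle with ⟨hij, h1c⟩ | ⟨h10, -⟩
  · exact ⟨hij.symm, h1c.symm⟩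
  · exact absurd h10 one_ne_zero

abbrev SqQuotient (m : ℕ) : Type := MvPolynomial (Fin m) ℤ ⧸ sqIdeal m

noncomputable abbrev sqGen (m : ℕ) (i : Fin m) : SqQuotient m :=
  Ideal.Quotient.mk (sqIdeal m) (X i)

section

variable {m : ℕ}

theorem coeff_eq_zero_of_mem_sqIdeal {P : MvPolynomial (Fin m) ℤ} (hP : P ∈ sqIdeal m)
    {d : Fin m →₀ ℕ} (hd : ∀ i, d i ≤ 1) : coeff d P = 0 := by
  have hspan : sqIdeal m = Ideal.span ((fun s => monomial s (1 : ℤ)) ''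
      Set.range fun i : Fin m => Finsupp.single i 2) := by
    rw [sqIdeal, ← Set.range_comp]
    simp [Function.comp_def, X_pow_eq_monomial]
  rw [hspan, mem_ideal_span_monomial_image] at hP
  by_contra hd0
  obtain ⟨_, ⟨i, rfl⟩, hle⟩ := hP d (mem_support_iff.mpr hd0)
  have := hle i
  simp only [Finsupp.single_eq_same] at this
  linarith [hd i]

theorem coeff_single_add_single_sq_sum_smul_X (c : Fin m → ℤ) {p q : Fin m} (hpq : p ≠ q) :
    coeff (Finsupp.single p 1 + Finsupp.single q 1) ((∑ j, c j • X j) ^ 2) = 2 * (c p * c q) := by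
  simp only [sq, Finset.sum_mul_sum, smul_mul_smul, X, monomial_mul, coeff_sum, coeff_smul,
    coeff_monomial, Finsupp.single_add_single_eq_single_add_single one_ne_zero one_ne_zero]
  rw [Fintype.sum_eq_add p q hpq fun j hj => by simp [hj.1, hj.2]]
  simp [hpq, hpq.symm]
  ring

theorem sum_zsmul_sqGen (c : Fin m → ℤ) :
    ∑ j, c j • sqGen m j = Ideal.Quotient.mk (sqIdeal m) (∑ j, c j • X j) := by
  simp [map_sum]

theorem sqGen_sq (i : Fin m) : sqGen m i ^ 2 = 0 := by
  rw [← map_pow, Ideal.Quotient.eq_zero_iff_mem]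
  exact Ideal.subset_span ⟨i, rfl⟩

theorem linearIndependent_sqGen : LinearIndependent ℤ (sqGen m) := by
  refine Fintype.linearIndependent_iff.mpr fun c hc k => ?_
  rw [sum_zsmul_sqGen, Ideal.Quotient.eq_zero_iff_mem] at hc
  have hk := coeff_eq_zero_of_mem_sqIdeal hc (d := Finsupp.single k 1) fun i => by
    by_cases hik : k = i <;> simp [hik]
  simp only [coeff_sum, coeff_smul, X, coeff_monomial, Finsupp.single_left_inj one_ne_zero] at hk
  simpa using hk

theorem mul_eq_zero_of_sum_zsmul_sqGen_sq_eq_zero {c : Fin m → ℤ}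
    (h : (∑ j, c j • sqGen m j) ^ 2 = 0) {p q : Fin m} (hpq : p ≠ q) : c p * c q = 0 := by
  rw [sum_zsmul_sqGen, ← map_pow, Ideal.Quotient.eq_zero_iff_mem] at h
  have hpq' := coeff_eq_zero_of_mem_sqIdeal h (d := Finsupp.single p 1 + Finsupp.single q 1)
    fun i => by by_cases hp : p = i <;> by_cases hq : q = i <;> simp_all
  rw [coeff_single_add_single_sq_sum_smul_X c hpq] at hpq'
  omega

theorem exists_eq_zsmul_sqGen_of_sq_eq_zero [Nonempty (Fin m)] {y : SqQuotient m}
    (hy : y ∈ Submodule.span ℤ (Set.range (sqGen m))) (hy2 : y ^ 2 = 0) :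
    ∃ j, ∃ a : ℤ, y = a • sqGen m j := by
  obtain ⟨c, rfl⟩ := (Submodule.mem_span_range_iff_exists_fun ℤ).mp hy
  by_cases hc : ∃ j, c j ≠ 0
  · obtain ⟨j, hj⟩ := hc
    refine ⟨j, c j, Fintype.sum_eq_single j fun k hk => ?_⟩
    rw [(mul_eq_zero.mp (mul_eq_zero_of_sum_zsmul_sqGen_sq_eq_zero hy2 hk)).resolve_right hj,
      zero_smul]
  · push Not at hc
    exact ⟨Classical.arbitrary _, 0, by simp [hc]⟩

theorem exists_map_sqGen_eq_zsmul {F : Type*} [FunLike F (SqQuotient m) (SqQuotient m)]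
    [RingHomClass F (SqQuotient m) (SqQuotient m)] (φ : F)
    (hφ : ∀ i, φ (sqGen m i) ∈ Submodule.span ℤ (Set.range (sqGen m))) :
    ∃ (σ : Fin m → Fin m) (a : Fin m → ℤ), ∀ i, φ (sqGen m i) = a i • sqGen m (σ i) := by
  have h : ∀ i, ∃ j, ∃ a : ℤ, φ (sqGen m i) = a • sqGen m j := fun i =>
    have : Nonempty (Fin m) := ⟨i⟩
    exists_eq_zsmul_sqGen_of_sq_eq_zero (hφ i) (by rw [← map_pow, sqGen_sq, map_zero])
  choose σ a ha using h
  exact ⟨σ, a, ha⟩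

end

theorem stmt13_general (m : ℕ)
    (φ : (MvPolynomial (Fin m) ℤ ⧸ sqIdeal m) ≃+* (MvPolynomial (Fin m) ℤ ⧸ sqIdeal m))
    (hφ : Submodule.map φ.toRingHom.toIntAlgHom.toLinearMap
        (Submodule.span ℤ (Set.range fun i : Fin m => Ideal.Quotient.mk (sqIdeal m) (X i))) =
      Submodule.span ℤ (Set.range fun i : Fin m => Ideal.Quotient.mk (sqIdeal m) (X i))) :
    ∃ (σ : Equiv.Perm (Fin m)) (ε : Fin m → ℤ),
      (∀ i, ε i = 1 ∨ ε i = -1) ∧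
      ∀ i, φ (Ideal.Quotient.mk (sqIdeal m) (X i)) =
        ε i • Ideal.Quotient.mk (sqIdeal m) (X (σ i)) := by
  have hgen : ∀ i, sqGen m i ∈ Submodule.span ℤ (Set.range (sqGen m)) :=
    fun i => Submodule.subset_span ⟨i, rfl⟩
  have hφV : ∀ i, φ (sqGen m i) ∈ Submodule.span ℤ (Set.range (sqGen m)) :=
    fun i => hφ ▸ Submodule.mem_map_of_mem (hgen i)
  have hφV' : ∀ i, φ.symm (sqGen m i) ∈ Submodule.span ℤ (Set.range (sqGen m)) := by
    intro i
    obtain ⟨v, hv, hφv⟩ := hφ.symm ▸ hgen i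
    simpa [← hφv] using hv
  obtain ⟨σ, a, ha⟩ := exists_map_sqGen_eq_zsmul φ hφV
  obtain ⟨τ, b, hb⟩ := exists_map_sqGen_eq_zsmul φ.symm hφV'
  have hinv : ∀ i, τ (σ i) = i ∧ a i * b (σ i) = 1 := fun i =>
    linearIndependent_sqGen.eq_and_eq_one_of_eq_smul <| calc
      sqGen m i = φ.symm (φ (sqGen m i)) := (φ.symm_apply_apply _).symm
      _ = (a i * b (σ i)) • sqGen m (τ (σ i)) := by
        rw [ha, map_zsmul, hb, mul_smul]
  have hσ : Function.Bijective σ :=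
    Finite.injective_iff_bijective.mp (Function.LeftInverse.injective fun i => (hinv i).1)
  exact ⟨Equiv.ofBijective σ hσ, a, fun i => Int.eq_one_or_neg_one_of_mul_eq_one (hinv i).2, ha⟩

/-- Every graded ring automorphism of `S_m = ℤ[x₁,…,x_m]/⟨x₁²,…,x_m²⟩` (a ring automorphism
carrying the ℤ-span of `x₁,…,x_m` onto itself) is given by a permutation of the generators
together with sign changes. -/
theorem stmt13 (m : ℕ) (hm : 1 ≤ m)
    (φ : (MvPolynomial (Fin m) ℤ ⧸ sqIdeal m) ≃+* (MvPolynomial (Fin m) ℤ ⧸ sqIdeal m))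
    (hφ : Submodule.map φ.toRingHom.toIntAlgHom.toLinearMap
        (Submodule.span ℤ (Set.range fun i : Fin m => Ideal.Quotient.mk (sqIdeal m) (X i))) =
      Submodule.span ℤ (Set.range fun i : Fin m => Ideal.Quotient.mk (sqIdeal m) (X i))) :
    ∃ (σ : Equiv.Perm (Fin m)) (ε : Fin m → ℤ),
      (∀ i, ε i = 1 ∨ ε i = -1) ∧
      ∀ i, φ (Ideal.Quotient.mk (sqIdeal m) (X i)) =
        ε i • Ideal.Quotient.mk (sqIdeal m) (X (σ i)) :=
  stmt13_general m φ hφ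
end
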